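/- The ring 𝓡 = ℂ[s,A,B,C,D,E]/I_{sE} is an integral domain. -/

import Mathlib

open MvPolynomial

/-- Variables: `s = X 0`, `A = X 1`, `B = X 2`, `C = X 3`, `D = X 4`, `E = X 5`. -/
noncomputable def n₁ : MvPolynomial (Fin 6) ℂ :=
  ((X 1) ^ 2 + (X 0) ^ 5 * (X 5) ^ 5) * (X 1) ^ 2 - X 2 * X 3

noncomputable def n₂ : MvPolynomial (Fin 6) ℂ :=
  ((X 1) ^ 2 + (X 0) ^ 5 * (X 5) ^ 5) * ((X 2) ^ 2 - X 4) - X 3 * X 4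

noncomputable def n₃ : MvPolynomial (Fin 6) ℂ :=
  X 2 * ((X 2) ^ 2 - X 4) - (X 1) ^ 2 * X 4

/-- The ideal generated by the three 2×2 minors of
`[[A² + s⁵E⁵, B, D], [C, A², B² − D]]`. -/
noncomputable def I_sE : Ideal (MvPolynomial (Fin 6) ℂ) :=
  Ideal.span {n₁, n₂, n₃}

/-!
Write `𝓠 = ℂ[s, A, E]`, `u = A² + s⁵E⁵`, `a = A²` and `b, c, d` for the classes of `B, C, D`.
The generators of `I_{sE}` say `bc = ua`, `bd = b³ - ad` and `cd = u(b² - d)`; these rewrite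
every monomial in `b, c, d`, so `𝓡 = 𝓠[b] + 𝓠[c] + 𝓠[d]` as a `𝓠`-module.
Over `K = Frac 𝓠`, the substitution `B ↦ t`, `C ↦ ua/t`, `D ↦ t³/(t + a)` kills `I_{sE}`, and it
is injective on `𝓠[b] + 𝓠[c] + 𝓠[d]`: in `p(t) + q(ua/t) + r(t³/(t + a)) = 0` only the middle
term has a pole at `t = 0` (of order `deg q`) and only the last one at `t = -a` (of order `deg r`).
So `𝓡` embeds into the field `K(t)`.
-/

namespace Polynomial

theorem eval_homogenize_of_snd_eq_zero {R : Type*} [CommSemiring R] (p : R[X]) (n : ℕ) (x : R) :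
    MvPolynomial.eval ![x, 0] (p.homogenize n) = p.coeff n * x ^ n := by
  rw [homogenize, map_sum, Finset.sum_eq_single (n, 0)]
  · simp [MvPolynomial.eval_monomial, Finsupp.prod_fintype]
  · rintro ⟨k, l⟩ hkl hne
    have hl : l ≠ 0 := by
      rintro rfl
      exact hne (by simpa using hkl)
    simp [MvPolynomial.eval_monomial, Finsupp.prod_fintype, hl]
  · simp

theorem eval_aeval_homogenize_of_eval_eq_zero {R : Type*} [CommSemiring R] (p : R[X]) (n : ℕ)
    (u : R[X]) {v : R[X]} {z : R} (hv : v.eval z = 0) :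
    (MvPolynomial.aeval ![u, v] (p.homogenize n)).eval z = p.coeff n * u.eval z ^ n := by
  rw [← coe_aeval_eq_eval, MvPolynomial.comp_aeval_apply, MvPolynomial.aeval_eq_eval,
    ← eval_homogenize_of_snd_eq_zero]
  congr 2
  funext i; fin_cases i <;> simp [hv]

theorem aeval_homogenize {K L : Type*} [Field K] [Field L] [Algebra K L] {p : K[X]} {n : ℕ}
    (hn : p.natDegree ≤ n) (x : L) {y : L} (hy : y ≠ 0) :
    MvPolynomial.aeval ![x, y] (p.homogenize n) = aeval (x / y) p * y ^ n := by
  have := eval_homogenize (p := p.map (algebraMap K L)) ((natDegree_map_le).trans hn) ![x, y] hy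
  rw [homogenize_map, MvPolynomial.eval_map] at this
  simpa [MvPolynomial.aeval_def, eval_map_algebraMap] using this

theorem algebraMap_aeval_homogenize {K A L : Type*} [Field K] [CommRing A] [Field L] [Algebra K A]
    [Algebra A L] [Algebra K L] [IsScalarTower K A L] {p : K[X]} {n : ℕ} (hn : p.natDegree ≤ n)
    (u : A) {v : A} (hv : algebraMap A L v ≠ 0) :
    algebraMap A L (MvPolynomial.aeval ![u, v] (p.homogenize n)) =
      aeval (algebraMap A L u / algebraMap A L v) p * algebraMap A L v ^ n := by
  rw [← aeval_homogenize hn _ hv, ← IsScalarTower.coe_toAlgHom' K, MvPolynomial.comp_aeval_apply]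
  congr 2
  funext i; fin_cases i <;> rfl

end Polynomial

namespace RatFunc

theorem X_add_C_ne_zero {K : Type*} [Field K] (a : K) : (X + C a : RatFunc K) ≠ 0 := by
  rw [← algebraMap_X, ← algebraMap_C, ← map_add]
  exact (map_ne_zero_iff _ (algebraMap_injective K)).2 (Polynomial.X_add_C_ne_zero a)

open Polynomial in
theorem natDegree_eq_zero_of_aeval_add_aeval_add_aeval_eq_zero {K : Type*} [Field K] {g a : K}
    (hg : g ≠ 0) (ha : a ≠ 0) {p q r : K[X]}
    (h : Polynomial.aeval X p + Polynomial.aeval (C g / X) q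
      + Polynomial.aeval (X ^ 3 / (X + C a)) r = 0) :
    q.natDegree = 0 ∧ r.natDegree = 0 ∧ p + q + r = 0 := by
  set J := q.natDegree
  set N := r.natDegree
  set q' : K[X] := MvPolynomial.aeval ![Polynomial.C g, Polynomial.X] (q.homogenize J)
  set r' : K[X] := MvPolynomial.aeval ![Polynomial.X ^ 3, Polynomial.X + Polynomial.C a]
    (r.homogenize N)
  have hq' : algebraMap K[X] (RatFunc K) q' = Polynomial.aeval (C g / X) q * X ^ J := by
    rw [algebraMap_aeval_homogenize le_rfl _ (by rw [algebraMap_X]; exact X_ne_zero),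
      algebraMap_C, algebraMap_X]
  have hr' : algebraMap K[X] (RatFunc K) r' =
      Polynomial.aeval (X ^ 3 / (X + C a)) r * (X + C a) ^ N := by
    have hXa : algebraMap K[X] (RatFunc K) (Polynomial.X + Polynomial.C a) = X + C a := by
      rw [map_add, algebraMap_X, algebraMap_C]
    rw [algebraMap_aeval_homogenize le_rfl _ (by rw [hXa]; exact X_add_C_ne_zero a), hXa,
      map_pow, algebraMap_X]
  -- clear the denominators `X ^ J` and `(X + C a) ^ N`
  have key : p * Polynomial.X ^ J * (Polynomial.X + Polynomial.C a) ^ N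
      + q' * (Polynomial.X + Polynomial.C a) ^ N + r' * Polynomial.X ^ J = 0 := by
    apply algebraMap_injective K
    simp only [map_add, map_mul, map_pow, hq', hr', algebraMap_X, algebraMap_C, map_zero]
    rw [aeval_X_left_eq_algebraMap] at h
    linear_combination (X ^ J * (X + C a) ^ N) * h
  have hJ : J = 0 := by
    by_contra hJ
    have := congrArg (Polynomial.eval 0) key
    simp [q', eval_aeval_homogenize_of_eval_eq_zero, zero_pow hJ, hg, ha] at this
    exact hJ (by simp [J, leadingCoeff_eq_zero.1 this])
  have hN : N = 0 := by
    by_contra hN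
    have := congrArg (Polynomial.eval (-a)) key
    simp [r', eval_aeval_homogenize_of_eval_eq_zero, zero_pow hN, ha] at this
    exact hN (by simp [N, leadingCoeff_eq_zero.1 this])
  refine ⟨hJ, hN, algebraMap_injective K ?_⟩
  rw [eq_C_of_natDegree_eq_zero hJ, eq_C_of_natDegree_eq_zero hN] at h ⊢
  simpa [aeval_X_left_eq_algebraMap, algebraMap_C] using h

end RatFunc

theorem Algebra.toSubmodule_adjoin_le_of_mul_mem {R A : Type*} [CommSemiring R] [Semiring A]
    [Algebra R A] {s : Set A} {M : Submodule R A} (h1 : 1 ∈ M)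
    (hmul : ∀ m ∈ M, ∀ x ∈ s, m * x ∈ M) : Subalgebra.toSubmodule (Algebra.adjoin R s) ≤ M := by
  rw [Algebra.adjoin_eq_span, Submodule.span_le]
  intro x hx
  induction hx using Submonoid.closure_induction_right with
  | one => exact h1
  | mul_right x _ y hy ih => exact hmul x ih y hy

theorem Polynomial.aeval_mul_mem {R A : Type*} [CommSemiring R] [Semiring A] [Algebra R A]
    {M : Submodule R A} {t x : A} (h : ∀ k, t ^ k * x ∈ M) (p : Polynomial R) :
    Polynomial.aeval t p * x ∈ M := by
  induction p using Polynomial.induction_on' with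
  | add p q hp hq => rw [map_add, add_mul]; exact M.add_mem hp hq
  | monomial k c =>
    rw [Polynomial.aeval_monomial, mul_assoc, ← Algebra.smul_def]
    exact M.smul_mem c (h k)

section NormalForms

variable {R : Type*} [CommRing R]

noncomputable def normalForms (Q : Type*) [CommRing Q] [Algebra Q R] (b c d : R) : Submodule Q R :=
  Subalgebra.toSubmodule (Polynomial.aeval b).range ⊔
    Subalgebra.toSubmodule (Polynomial.aeval c).range ⊔
      Subalgebra.toSubmodule (Polynomial.aeval d).range

variable {Q : Type*} [CommRing Q] [Algebra Q R] {b c d : R}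

theorem mem_normalForms_iff {x : R} : x ∈ normalForms Q b c d ↔ ∃ p q r : Polynomial Q,
      Polynomial.aeval b p + Polynomial.aeval c q + Polynomial.aeval d r = x := by
  simp only [normalForms, Submodule.mem_sup, Subalgebra.mem_toSubmodule, AlgHom.mem_range]
  constructor
  · rintro ⟨_, ⟨_, ⟨p, rfl⟩, _, ⟨q, rfl⟩, rfl⟩, _, ⟨r, rfl⟩, rfl⟩
    exact ⟨p, q, r, rfl⟩
  · rintro ⟨p, q, r, rfl⟩
    exact ⟨_, ⟨_, ⟨p, rfl⟩, _, ⟨q, rfl⟩, rfl⟩, _, ⟨r, rfl⟩, rfl⟩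

theorem aeval_left_mem_normalForms (p : Polynomial Q) :
    Polynomial.aeval b p ∈ normalForms Q b c d :=
  mem_normalForms_iff.2 ⟨p, 0, 0, by simp⟩

theorem aeval_middle_mem_normalForms (q : Polynomial Q) :
    Polynomial.aeval c q ∈ normalForms Q b c d :=
  mem_normalForms_iff.2 ⟨0, q, 0, by simp⟩

theorem aeval_right_mem_normalForms (r : Polynomial Q) :
    Polynomial.aeval d r ∈ normalForms Q b c d :=
  mem_normalForms_iff.2 ⟨0, 0, r, by simp⟩

theorem pow_left_mem_normalForms (k : ℕ) : b ^ k ∈ normalForms Q b c d := by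
  simpa using aeval_left_mem_normalForms (c := c) (d := d) (Polynomial.X ^ k)

theorem pow_middle_mem_normalForms (k : ℕ) : c ^ k ∈ normalForms Q b c d := by
  simpa using aeval_middle_mem_normalForms (b := b) (d := d) (Polynomial.X ^ k)

theorem pow_right_mem_normalForms (k : ℕ) : d ^ k ∈ normalForms Q b c d := by
  simpa using aeval_right_mem_normalForms (b := b) (c := c) (Polynomial.X ^ k)

theorem algebraMap_mul_mem_normalForms (a : Q) {x : R} (hx : x ∈ normalForms Q b c d) :
    algebraMap Q R a * x ∈ normalForms Q b c d := by
  rw [← Algebra.smul_def]; exact Submodule.smul_mem _ a hx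

theorem mul_mem_normalForms {x : R} (hb : ∀ k, b ^ k * x ∈ normalForms Q b c d)
    (hc : ∀ k, c ^ k * x ∈ normalForms Q b c d) (hd : ∀ k, d ^ k * x ∈ normalForms Q b c d)
    {m : R} (hm : m ∈ normalForms Q b c d) : m * x ∈ normalForms Q b c d := by
  obtain ⟨p, q, r, rfl⟩ := mem_normalForms_iff.1 hm
  simp only [add_mul]
  exact add_mem (add_mem (p.aeval_mul_mem hb) (q.aeval_mul_mem hc)) (r.aeval_mul_mem hd)

variable {g a u : Q}

theorem pow_mul_pow_mem_normalForms_of_mul_eq (hbc : b * c = algebraMap Q R g) (j k : ℕ) :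
    b ^ j * c ^ k ∈ normalForms Q b c d := by
  induction k generalizing j with
  | zero => simpa using pow_left_mem_normalForms j
  | succ k ih =>
    cases j with
    | zero => simpa using pow_middle_mem_normalForms (k + 1)
    | succ j =>
      have : b ^ (j + 1) * c ^ (k + 1) = algebraMap Q R g * (b ^ j * c ^ k) := by
        rw [← hbc]; ring
      rw [this]
      exact algebraMap_mul_mem_normalForms g (ih j)

theorem pow_mul_pow_mem_normalForms_of_mul_eq_sub (hbd : b * d = b ^ 3 - algebraMap Q R a * d)
    (j k : ℕ) : b ^ j * d ^ k ∈ normalForms Q b c d := by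
  induction k generalizing j with
  | zero => simpa using pow_left_mem_normalForms j
  | succ k ih =>
    induction j with
    | zero => simpa using pow_right_mem_normalForms (k + 1)
    | succ j ihj =>
      have : b ^ (j + 1) * d ^ (k + 1) =
          b ^ (j + 3) * d ^ k - algebraMap Q R a * (b ^ j * d ^ (k + 1)) := by
        linear_combination (b ^ j * d ^ k) * hbd
      rw [this]
      exact sub_mem (ih (j + 3)) (algebraMap_mul_mem_normalForms a ihj)

theorem mul_left_mem_normalForms (hbc : b * c = algebraMap Q R g)
    (hbd : b * d = b ^ 3 - algebraMap Q R a * d) {m : R} (hm : m ∈ normalForms Q b c d) :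
    m * b ∈ normalForms Q b c d := by
  refine mul_mem_normalForms (fun k => ?_) (fun k => ?_) (fun k => ?_) hm
  · rw [← pow_succ]; exact pow_left_mem_normalForms _
  · simpa [mul_comm] using pow_mul_pow_mem_normalForms_of_mul_eq hbc 1 k
  · simpa [mul_comm] using pow_mul_pow_mem_normalForms_of_mul_eq_sub hbd 1 k

theorem mul_middle_mem_normalForms (hbc : b * c = algebraMap Q R g)
    (hbd : b * d = b ^ 3 - algebraMap Q R a * d) (hcd : c * d = algebraMap Q R u * (b ^ 2 - d))
    {m : R} (hm : m ∈ normalForms Q b c d) : m * c ∈ normalForms Q b c d := by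
  refine mul_mem_normalForms (fun k => ?_) (fun k => ?_) (fun k => ?_) hm
  · simpa using pow_mul_pow_mem_normalForms_of_mul_eq hbc k 1
  · rw [← pow_succ]; exact pow_middle_mem_normalForms _
  · cases k with
    | zero => simpa using pow_middle_mem_normalForms 1
    | succ k =>
      have : d ^ (k + 1) * c = algebraMap Q R u * (b ^ 2 * d ^ k - b ^ 0 * d ^ (k + 1)) := by
        linear_combination d ^ k * hcd
      rw [this]
      exact algebraMap_mul_mem_normalForms u (sub_mem
        (pow_mul_pow_mem_normalForms_of_mul_eq_sub hbd 2 k)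
        (pow_mul_pow_mem_normalForms_of_mul_eq_sub hbd 0 (k + 1)))

theorem mul_right_mem_normalForms (hbc : b * c = algebraMap Q R g)
    (hbd : b * d = b ^ 3 - algebraMap Q R a * d) (hcd : c * d = algebraMap Q R u * (b ^ 2 - d))
    {m : R} (hm : m ∈ normalForms Q b c d) : m * d ∈ normalForms Q b c d := by
  refine mul_mem_normalForms (fun k => ?_) (fun k => ?_) (fun k => ?_) hm
  · simpa using pow_mul_pow_mem_normalForms_of_mul_eq_sub hbd k 1
  · induction k with
    | zero => simpa using pow_right_mem_normalForms 1
    | succ k ih =>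
      have : c ^ (k + 1) * d = algebraMap Q R u * (b ^ 2 * c ^ k - c ^ k * d) := by
        linear_combination c ^ k * hcd
      rw [this]
      exact algebraMap_mul_mem_normalForms u
        (sub_mem (pow_mul_pow_mem_normalForms_of_mul_eq hbc 2 k) ih)
  · rw [← pow_succ]; exact pow_right_mem_normalForms _

theorem toSubmodule_adjoin_le_normalForms (hbc : b * c = algebraMap Q R g)
    (hbd : b * d = b ^ 3 - algebraMap Q R a * d) (hcd : c * d = algebraMap Q R u * (b ^ 2 - d)) :
    Subalgebra.toSubmodule (Algebra.adjoin Q {b, c, d}) ≤ normalForms Q b c d := by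
  refine Algebra.toSubmodule_adjoin_le_of_mul_mem (by simpa using pow_left_mem_normalForms 0) ?_
  rintro m hm x (rfl | rfl | rfl)
  · exact mul_left_mem_normalForms hbc hbd hm
  · exact mul_middle_mem_normalForms hbc hbd hcd hm
  · exact mul_right_mem_normalForms hbc hbd hcd hm

end NormalForms

theorem eq_zero_of_mem_normalForms_of_map_eq_zero {Q R K : Type*} [CommRing Q] [CommRing R]
    [Algebra Q R] [Field K] {κ : Q →+* K} (hκ : Function.Injective κ) {φ : R →+* RatFunc K}
    (hφ : (algebraMap K (RatFunc K)).comp κ = φ.comp (algebraMap Q R)) {g a : K} (hg : g ≠ 0)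
    (ha : a ≠ 0) {b c d : R} (hb : φ b = RatFunc.X) (hc : φ c = RatFunc.C g / RatFunc.X)
    (hd : φ d = RatFunc.X ^ 3 / (RatFunc.X + RatFunc.C a)) {x : R}
    (hx : x ∈ normalForms Q b c d) (h : φ x = 0) : x = 0 := by
  obtain ⟨p, q, r, rfl⟩ := mem_normalForms_iff.1 hx
  simp only [map_add, Polynomial.map_aeval_eq_aeval_map hφ, hb, hc, hd] at h
  obtain ⟨hq, hr, hsum⟩ := RatFunc.natDegree_eq_zero_of_aeval_add_aeval_add_aeval_eq_zero hg ha h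
  rw [Polynomial.natDegree_map_eq_of_injective hκ] at hq hr
  rw [Polynomial.eq_C_of_natDegree_eq_zero hq, Polynomial.eq_C_of_natDegree_eq_zero hr] at hsum ⊢
  have hsum' : p + Polynomial.C (q.coeff 0) + Polynomial.C (r.coeff 0) = 0 :=
    Polynomial.map_injective κ hκ (by simpa using hsum)
  calc _ = Polynomial.aeval b (p + Polynomial.C (q.coeff 0) + Polynomial.C (r.coeff 0)) := by
        simp
    _ = 0 := by rw [hsum', map_zero]

namespace I_sE

local notation "𝓠" => MvPolynomial (Fin 3) ℂ
local notation "𝓡" => MvPolynomial (Fin 6) ℂ ⧸ I_sE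

-- `𝓠 = ℂ[s, A, E]`, sitting inside `ℂ[s, A, B, C, D, E]` via `X 0, X 1, X 2 ↦ X 0, X 1, X 5`.
noncomputable local instance : Algebra 𝓠 𝓡 :=
  ((Ideal.Quotient.mk I_sE).comp (rename ![0, 1, 5]).toRingHom).toAlgebra

noncomputable def u : 𝓠 := X 1 ^ 2 + X 0 ^ 5 * X 2 ^ 5

noncomputable def a : 𝓠 := X 1 ^ 2

noncomputable def b : 𝓡 := Ideal.Quotient.mk I_sE (X 2)
noncomputable def c : 𝓡 := Ideal.Quotient.mk I_sE (X 3)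
noncomputable def d : 𝓡 := Ideal.Quotient.mk I_sE (X 4)

theorem algebraMap_eq_mk_rename (q : 𝓠) :
    algebraMap 𝓠 𝓡 q = Ideal.Quotient.mk I_sE (rename ![0, 1, 5] q) := rfl

theorem b_mul_c : b * c = algebraMap 𝓠 𝓡 (u * a) := by
  rw [algebraMap_eq_mk_rename, b, c, ← map_mul, Ideal.Quotient.eq]
  convert I_sE.neg_mem (Ideal.subset_span (Set.mem_insert n₁ _)) using 1
  simp [n₁, u, a]

theorem b_mul_d : b * d = b ^ 3 - algebraMap 𝓠 𝓡 a * d := by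
  rw [algebraMap_eq_mk_rename, b, d, ← map_pow, ← map_mul, ← map_mul, ← map_sub, Ideal.Quotient.eq]
  convert I_sE.neg_mem (Ideal.subset_span (by simp : n₃ ∈ {n₁, n₂, n₃})) using 1
  simp [n₃, a]; ring

theorem c_mul_d : c * d = algebraMap 𝓠 𝓡 u * (b ^ 2 - d) := by
  rw [algebraMap_eq_mk_rename, b, c, d, ← map_pow, ← map_sub, ← map_mul, ← map_mul,
    Ideal.Quotient.eq]
  convert I_sE.neg_mem (Ideal.subset_span (by simp : n₂ ∈ {n₁, n₂, n₃})) using 1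
  simp [n₂, u]

theorem adjoin_eq_top : Algebra.adjoin 𝓠 {b, c, d} = ⊤ := by
  have hQ (q : 𝓠) : Ideal.Quotient.mk I_sE (rename ![0, 1, 5] q) ∈ Algebra.adjoin 𝓠 {b, c, d} :=
    Subalgebra.algebraMap_mem _ q
  refine Algebra.eq_top_iff.2 fun x => ?_
  obtain ⟨p, rfl⟩ := Ideal.Quotient.mk_surjective x
  induction p using MvPolynomial.induction_on with
  | C z => simpa using hQ (C z)
  | add p q hp hq => rw [map_add]; exact add_mem hp hq
  | mul_X p i hp =>
    rw [map_mul]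
    refine mul_mem hp ?_
    fin_cases i
    · simpa using hQ (X 0)
    · simpa using hQ (X 1)
    · exact Algebra.subset_adjoin (by simp [b])
    · exact Algebra.subset_adjoin (by simp [c])
    · exact Algebra.subset_adjoin (by simp [d])
    · simpa using hQ (X 2)

local notation "𝓚" => FractionRing (MvPolynomial (Fin 3) ℂ)

noncomputable def κ : 𝓠 →+* 𝓚 := algebraMap 𝓠 𝓚

noncomputable def toRatFunc : MvPolynomial (Fin 6) ℂ →+* RatFunc 𝓚 :=
  eval₂Hom ((RatFunc.C.comp κ).comp C) ![RatFunc.C (κ (X 0)), RatFunc.C (κ (X 1)), RatFunc.X,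
    RatFunc.C (κ (u * a)) / RatFunc.X, RatFunc.X ^ 3 / (RatFunc.X + RatFunc.C (κ a)),
    RatFunc.C (κ (X 2))]

theorem toRatFunc_comp_rename :
    toRatFunc.comp (rename ![0, 1, 5]).toRingHom = RatFunc.C.comp κ := by
  refine MvPolynomial.ringHom_ext (fun z => by simp [toRatFunc]) fun i => ?_
  fin_cases i <;> simp [toRatFunc]

theorem le_ker_toRatFunc : I_sE ≤ RingHom.ker toRatFunc := by
  have hX : (RatFunc.X : RatFunc 𝓚) ≠ 0 := RatFunc.X_ne_zero
  have hXa : RatFunc.X + RatFunc.C (κ (X 1)) ^ 2 ≠ 0 := by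
    simpa [a] using RatFunc.X_add_C_ne_zero (κ a)
  rw [I_sE, Ideal.span_le]
  rintro x (rfl | rfl | rfl) <;> simp [n₁, n₂, n₃, toRatFunc, u, a] <;> field_simp <;> ring

noncomputable def quotientToRatFunc : 𝓡 →+* RatFunc 𝓚 :=
  Ideal.Quotient.lift I_sE toRatFunc fun _ hx => le_ker_toRatFunc hx

theorem quotientToRatFunc_injective : Function.Injective quotientToRatFunc := by
  have hκ : Function.Injective κ := IsFractionRing.injective 𝓠 𝓚
  have hua : κ (u * a) ≠ 0 := (map_ne_zero_iff κ hκ).2 fun h => by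
    simpa [u, a] using congrArg (eval fun _ => (1 : ℂ)) h
  have ha : κ a ≠ 0 := (map_ne_zero_iff κ hκ).2 (pow_ne_zero 2 (X_ne_zero 1))
  have hφ : (algebraMap 𝓚 (RatFunc 𝓚)).comp κ = quotientToRatFunc.comp (algebraMap 𝓠 𝓡) := by
    rw [RatFunc.algebraMap_eq_C, ← toRatFunc_comp_rename]
    rfl
  refine (injective_iff_map_eq_zero _).2 fun x hx =>
    eq_zero_of_mem_normalForms_of_map_eq_zero hκ hφ hua ha ?_ ?_ ?_
      (toSubmodule_adjoin_le_normalForms b_mul_c b_mul_d c_mul_d ?_) hx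
  · simp [quotientToRatFunc, b, toRatFunc]
  · simp [quotientToRatFunc, c, toRatFunc]
  · simp [quotientToRatFunc, d, toRatFunc]
  · rw [adjoin_eq_top]; trivial

end I_sE

theorem stmt_14 : IsDomain (MvPolynomial (Fin 6) ℂ ⧸ I_sE) :=
  I_sE.quotientToRatFunc_injective.isDomain
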